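/- Suppose η = Σ_{r∈Σ_R} p_r K_r^{−α_min} < 1, let β ∈ (α_min,γ) ∩ (0,1], t₂ = 1−β, and let a₂ > 0. If f ∈ C₁ satisfies f(u) ≤ a₂ (u−1/2)^{−t₂} on (1/2,1], then for all x, y ∈ (1/2,1] with x ≥ y one has 0 ≤ (x−1/2)^d f(x) − (y−1/2)^d f(y) ≤ a₂ · 2^{−d+1+t₂} · d · (x − y); in particular the map u ↦ (u−1/2)^d f(u) is Lipschitz on (1/2,1] with Lipschitz constant a₂ · 2^{−d+1+t₂} · d. -/
import Mathlib


open MeasureTheory Set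

/-- Left branch of the LSV-type maps: `x ↦ x(1 + 2^α x^α)`. -/
noncomputable def lsvLeft (α x : ℝ) : ℝ := x * (1 + 2 ^ α * x ^ α)

/-- The LSV map `S_α`. -/
noncomputable def lsvMap (α : ℝ) (x : ℝ) : ℝ :=
  if x ≤ 1 / 2 then lsvLeft α x else 2 * x - 1

/-- The map `R_{α,K}`. -/
noncomputable def rMap (α K : ℝ) (x : ℝ) : ℝ :=
  if x ≤ 1 / 2 then lsvLeft α x
  else 1 / 2 + K * (x - 1 / 2) + 2 * (1 - K) * (x - 1 / 2) ^ 2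

/-- The Perron–Frobenius operator `P` of the random system, written in terms of
the inverse `y j` of the left branch of `T j`, the inverse `zr r` of the right
branch of `T r` (for `r ∈ SR`), and `z(x) = (x+1)/2`.  Here
`ξ_j(x) = (2 y_j(x))^{α_j}` and `DR_r(u) = K_r + 4(1-K_r)(u - 1/2)`. -/
noncomputable def PFop {N : ℕ} (SR : Finset (Fin N)) (p α K : Fin N → ℝ)
    (y zr : Fin N → ℝ → ℝ) (f : ℝ → ℝ) (x : ℝ) : ℝ :=
  (∑ j, p j * (f (y j x) / (1 + (α j + 1) * (2 * y j x) ^ (α j))))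
    + (∑ j ∈ SRᶜ, p j) * (f ((x + 1) / 2) / 2)
    + if 1 / 2 < x then
        ∑ r ∈ SR, p r * (f (zr r x) / (K r + 4 * (1 - K r) * (zr r x - 1 / 2)))
      else 0

/-- Membership of the set `C₀`: nonnegative, decreasing and continuous on
`(0,1/2]` and on `(1/2,1]`, and Lebesgue integrable. -/
def memC0 (f : ℝ → ℝ) : Prop :=
  (∀ x ∈ Set.Ioc (0 : ℝ) 1, 0 ≤ f x) ∧
  AntitoneOn f (Set.Ioc (0 : ℝ) (1 / 2)) ∧
  ContinuousOn f (Set.Ioc (0 : ℝ) (1 / 2)) ∧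
  AntitoneOn f (Set.Ioc (1 / 2 : ℝ) 1) ∧
  ContinuousOn f (Set.Ioc (1 / 2 : ℝ) 1) ∧
  MeasureTheory.IntegrableOn f (Set.Ioc (0 : ℝ) 1)


/-- Membership of the set `C₁`: member of `C₀` such that `x ↦ x^d f(x)` is
increasing on `(0,1/2]` and `x ↦ (x-1/2)^d f(x)` is increasing on `(1/2,1]`. -/
def memC1 (d : ℝ) (f : ℝ → ℝ) : Prop :=
  memC0 f ∧
  MonotoneOn (fun x => x ^ d * f x) (Set.Ioc (0 : ℝ) (1 / 2)) ∧
  MonotoneOn (fun x => (x - 1 / 2) ^ d * f x) (Set.Ioc (1 / 2 : ℝ) 1)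

/-- Membership of the set `C₂(a₁,a₂,β)` (with `t₁ = α_min + 1 - β`,
`t₂ = 1 - β`): member of `C₁` with `f(x) ≤ a₁ x^{-t₁}` on `(0,1/2]`,
`f(x) ≤ a₂ (x-1/2)^{-t₂}` on `(1/2,1]` and `∫₀¹ f dλ = 1`. -/
def memC2 (d t₁ t₂ a₁ a₂ : ℝ) (f : ℝ → ℝ) : Prop :=
  memC1 d f ∧
  (∀ x ∈ Set.Ioc (0 : ℝ) (1 / 2), f x ≤ a₁ * x ^ (-t₁)) ∧
  (∀ x ∈ Set.Ioc (1 / 2 : ℝ) 1, f x ≤ a₂ * (x - 1 / 2) ^ (-t₂)) ∧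
  ∫ x in Set.Ioc (0 : ℝ) 1, f x = 1


/-- MVT bound: for `0 < b ≤ a` and `1 ≤ d`, `a^d - b^d ≤ d a^{d-1} (a-b)`. -/
lemma rpow_sub_rpow_le_aux (d a b : ℝ) (hb : 0 < b) (hba : b ≤ a) (hd : 1 ≤ d) :
    a ^ d - b ^ d ≤ d * a ^ (d - 1) * (a - b) := by
  rcases eq_or_lt_of_le hba with rfl | h
  · simp
  · obtain ⟨c, hc, hderiv⟩ := exists_hasDerivAt_eq_slope (fun x => x ^ d)
      (fun x => d * x ^ (d - 1)) h
      (fun x hx => (Real.continuousAt_rpow_const x d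
        (Or.inl (hb.trans_le hx.1).ne')).continuousWithinAt)
      (fun x hx => Real.hasDerivAt_rpow_const (Or.inr hd))
    have hca : c ≤ a := hc.2.le
    have hc0 : 0 ≤ c := (hb.trans hc.1).le
    have hab : (0:ℝ) < a - b := by linarith
    have h1 : a ^ d - b ^ d = d * c ^ (d - 1) * (a - b) := by
      field_simp at hderiv
      linarith [hderiv]
    rw [h1]
    have h2 : c ^ (d - 1) ≤ a ^ (d - 1) :=
      Real.rpow_le_rpow hc0 hca (by linarith)
    have hd0 : (0:ℝ) < d := by linarith
    have := mul_le_mul_of_nonneg_right (mul_le_mul_of_nonneg_left h2 hd0.le) hab.le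
    linarith

/-- Inequality (3.26): Lipschitz estimate for `u ↦ (u-1/2)^d f(u)` on `(1/2,1]`
for `f ∈ C₁` with `f(u) ≤ a₂ (u-1/2)^{-t₂}` on `(1/2,1]`, where `t₂ = 1 - β`. -/
theorem lipschitz_right_of_memC1
    (N : ℕ) (hN : 0 < N)
    (α K : Fin N → ℝ) (SR : Finset (Fin N))
    (hSR : SR.Nonempty) (hSS : SRᶜ.Nonempty)
    (hα : ∀ j, 0 < α j)
    (hK : ∀ r ∈ SR, K r ∈ Set.Ioo (0 : ℝ) 1)
    (p : Fin N → ℝ) (hp : ∀ j, 0 < p j) (hp1 : ∑ j, p j = 1)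
    (αmin : ℝ) (hαmin : IsLeast (Set.range α) αmin) (hαmin1 : αmin < 1)
    (αmax : ℝ) (hαmax : IsGreatest (Set.range α) αmax)
    (d : ℝ) (hd : d = αmax + 2)
    (hη : ∑ r ∈ SR, p r * K r ^ (-αmin) < 1)
    (γ : ℝ) (hγ : γ = sSup {δ : ℝ | 0 ≤ δ ∧ ∑ r ∈ SR, p r * K r ^ (-δ) < 1})
    (β : ℝ) (hβ1 : αmin < β) (hβ2 : β < γ) (hβ3 : 0 < β) (hβ4 : β ≤ 1)
    (t₂ : ℝ) (ht₂ : t₂ = 1 - β)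
    (a₂ : ℝ) (ha₂ : 0 < a₂)
    (f : ℝ → ℝ) (hf : memC1 d f)
    (hfbd : ∀ u ∈ Set.Ioc (1 / 2 : ℝ) 1, f u ≤ a₂ * (u - 1 / 2) ^ (-t₂)) :
    (∀ x ∈ Set.Ioc (1 / 2 : ℝ) 1, ∀ y ∈ Set.Ioc (1 / 2 : ℝ) 1, y ≤ x →
      0 ≤ (x - 1 / 2) ^ d * f x - (y - 1 / 2) ^ d * f y ∧
      (x - 1 / 2) ^ d * f x - (y - 1 / 2) ^ d * f y ≤
        a₂ * 2 ^ (-d + 1 + t₂) * d * (x - y)) ∧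
    LipschitzOnWith (Real.toNNReal (a₂ * 2 ^ (-d + 1 + t₂) * d))
      (fun u => (u - 1 / 2) ^ d * f u) (Set.Ioc (1 / 2 : ℝ) 1) := by
  
  -- basic facts
  obtain ⟨j, hj⟩ := hαmax.1
  have hαj : 0 < α j := hα j
  have hd2 : 2 < d := by rw [hd]; linarith [hj ▸ hαj]
  have ht₂0 : 0 ≤ t₂ := by rw [ht₂]; linarith
  have ht₂1 : t₂ < 1 := by rw [ht₂]; linarith
  have hC0 : 0 ≤ a₂ * 2 ^ (-d + 1 + t₂) * d := by positivity
  have key : ∀ x ∈ Set.Ioc (1 / 2 : ℝ) 1, ∀ y ∈ Set.Ioc (1 / 2 : ℝ) 1, y ≤ x →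
      0 ≤ (x - 1 / 2) ^ d * f x - (y - 1 / 2) ^ d * f y ∧
      (x - 1 / 2) ^ d * f x - (y - 1 / 2) ^ d * f y ≤
        a₂ * 2 ^ (-d + 1 + t₂) * d * (x - y) := by
    intro x hx y hy hyx
    have hb : (0:ℝ) < y - 1 / 2 := by linarith [hy.1]
    have ha : (0:ℝ) < x - 1 / 2 := by linarith [hx.1]
    have ha2 : x - 1 / 2 ≤ 1 / 2 := by linarith [hx.2]
    have hmono := hf.2.2 hy hx hyx
    constructor
    · simpa using sub_nonneg.mpr hmono
    · have hfx0 : 0 ≤ f x := hf.1.1 x ⟨by linarith [hx.1], hx.2⟩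
      have hfxy : f x ≤ f y := hf.1.2.2.2.1 hy hx hyx
      have step1 : (x - 1 / 2) ^ d * f x - (y - 1 / 2) ^ d * f y ≤
          ((x - 1 / 2) ^ d - (y - 1 / 2) ^ d) * f x := by
        have := mul_le_mul_of_nonneg_left hfxy (Real.rpow_nonneg hb.le d)
        nlinarith
      have step2 : (x - 1 / 2) ^ d - (y - 1 / 2) ^ d ≤
          d * (x - 1 / 2) ^ (d - 1) * (x - y) := by
        have h := rpow_sub_rpow_le_aux d (x - 1 / 2) (y - 1 / 2) hb
          (by linarith) (by linarith)
        have he : x - 1 / 2 - (y - 1 / 2) = x - y := by ring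
        rw [he] at h
        exact h
      have step3 : ((x - 1 / 2) ^ d - (y - 1 / 2) ^ d) * f x ≤
          (d * (x - 1 / 2) ^ (d - 1) * (x - y)) * (a₂ * (x - 1 / 2) ^ (-t₂)) := by
        apply mul_le_mul step2 (hfbd x hx) hfx0
        have h7 : (0:ℝ) ≤ (x - 1 / 2) ^ (d - 1) := Real.rpow_nonneg ha.le _
        exact mul_nonneg (mul_nonneg (by linarith) h7) (by linarith)
      have hsplit : (x - 1 / 2) ^ (d - 1) * (x - 1 / 2) ^ (-t₂) =
          (x - 1 / 2) ^ (d - 1 - t₂) := by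
        rw [← Real.rpow_add ha]; ring_nf
      have step4 : (x - 1 / 2) ^ (d - 1 - t₂) ≤ 2 ^ (-d + 1 + t₂) := by
        have h1 : (x - 1 / 2) ^ (d - 1 - t₂) ≤ (1 / 2 : ℝ) ^ (d - 1 - t₂) :=
          Real.rpow_le_rpow ha.le ha2 (by linarith)
        have h2 : ((1 / 2 : ℝ)) ^ (d - 1 - t₂) = 2 ^ (-d + 1 + t₂) := by
          rw [show (1 / 2 : ℝ) = 2⁻¹ by norm_num, Real.inv_rpow (by norm_num),
            ← Real.rpow_neg (by norm_num)]
          congr 1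
          ring
        linarith [h2 ▸ h1]
      calc (x - 1 / 2) ^ d * f x - (y - 1 / 2) ^ d * f y
          ≤ (d * (x - 1 / 2) ^ (d - 1) * (x - y)) * (a₂ * (x - 1 / 2) ^ (-t₂)) :=
            step1.trans step3
        _ = a₂ * d * (x - 1 / 2) ^ (d - 1 - t₂) * (x - y) := by
            rw [← hsplit]; ring
        _ ≤ a₂ * d * 2 ^ (-d + 1 + t₂) * (x - y) := by
            have h5 : a₂ * d * (x - 1 / 2) ^ (d - 1 - t₂) ≤
                a₂ * d * 2 ^ (-d + 1 + t₂) :=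
              mul_le_mul_of_nonneg_left step4 (by positivity)
            have h6 : (0:ℝ) ≤ x - y := by linarith
            nlinarith [h5, h6]
        _ = a₂ * 2 ^ (-d + 1 + t₂) * d * (x - y) := by ring
  refine ⟨key, ?_⟩
  apply LipschitzOnWith.of_dist_le_mul
  intro x hx y hy
  rw [Real.coe_toNNReal _ hC0, Real.dist_eq, Real.dist_eq]
  rcases le_total y x with h | h
  · obtain ⟨h0, h1⟩ := key x hx y hy h
    rw [abs_of_nonneg h0, abs_of_nonneg (by linarith)]
    exact h1
  · obtain ⟨h0, h1⟩ := key y hy x hx h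
    rw [abs_sub_comm, abs_of_nonneg h0, abs_sub_comm, abs_of_nonneg (by linarith)]
    exact h1
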